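/- Every invertible complex n×n matrix A has a base matrix, i.e., there exists B ∈ Mat(n×n, ℂ) with exp(B) = A. -/

import Mathlib

/-!
In a commutative Banach algebra over `ℝ` or `ℂ` the exponential is a homomorphism from the
additive group to the group of units whose image contains a neighbourhood of `1` (inverse
function theorem). Its image is therefore an open, hence clopen, subgroup of the units and
contains their identity component. Over `ℂ`, a unit `u` with countable spectrum lies in that
component: the complex line `z ↦ (1 - z) + z u` from `1` to `u` meets the non-units only at
countably many `z`, and the complement of a countable subset of `ℂ` is connected.

An invertible matrix `A` has finite spectrum, and so does `A` regarded as an element of the closed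
subalgebra it generates, which is commutative; hence `A` is an exponential there.
-/

open NormedSpace Topology

section CommBanachAlgebra

variable {𝔸 : Type*} [NormedCommRing 𝔸] [CompleteSpace 𝔸]

variable (𝔸) in
noncomputable def expUnitsSubgroup [NormedAlgebra ℚ 𝔸] : Subgroup 𝔸ˣ where
  carrier := Units.val ⁻¹' Set.range exp
  one_mem' := ⟨0, exp_zero⟩
  mul_mem' := by
    rintro _ _ ⟨x, hx⟩ ⟨y, hy⟩
    exact ⟨x + y, by rw [exp_add, hx, hy, Units.val_mul]⟩
  inv_mem' := by
    rintro u ⟨x, hx⟩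
    refine ⟨-x, (Units.inv_eq_of_mul_eq_one_right ?_).symm⟩
    rw [← hx, ← exp_add, add_neg_cancel, exp_zero]

theorem isOpen_expUnitsSubgroup [NormedAlgebra ℚ 𝔸] (𝕂 : Type*) [RCLike 𝕂] [NormedAlgebra 𝕂 𝔸] :
    IsOpen (expUnitsSubgroup 𝔸 : Set 𝔸ˣ) := by
  refine (expUnitsSubgroup 𝔸).isOpen_of_mem_nhds (g := 1) ?_
  have hexp : Filter.map exp (𝓝 (0 : 𝔸)) = 𝓝 1 := by
    simpa [exp_zero] using (hasStrictFDerivAt_exp_zero (𝕂 := 𝕂) (𝔸 := 𝔸)).map_nhds_eq_of_equiv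
      (f' := ContinuousLinearEquiv.refl 𝕂 𝔸)
  have hrange : Set.range (exp : 𝔸 → 𝔸) ∈ 𝓝 1 :=
    hexp ▸ Filter.mem_map.mpr (Filter.univ_mem' Set.mem_range_self)
  exact Units.continuous_val.continuousAt.preimage_mem_nhds (x := (1 : 𝔸ˣ))
    (by rwa [Units.val_one])

theorem exists_exp_eq_of_mem_connectedComponent_one (𝕂 : Type*) [RCLike 𝕂] [NormedAlgebra 𝕂 𝔸]
    {u : 𝔸ˣ} (hu : u ∈ connectedComponent 1) : ∃ x, exp x = (u : 𝔸) := by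
  let := NormedAlgebra.restrictScalars ℚ 𝕂 𝔸
  have hopen := isOpen_expUnitsSubgroup (𝔸 := 𝔸) 𝕂
  exact IsClopen.connectedComponent_subset ⟨Subgroup.isClosed_of_isOpen _ hopen, hopen⟩
    (expUnitsSubgroup 𝔸).one_mem hu

end CommBanachAlgebra

theorem countable_setOf_not_isUnit_lineMap {𝕜 A : Type*} [Field 𝕜] [Ring A] [Algebra 𝕜 A]
    {u : A} (hu : (spectrum 𝕜 u).Countable) :
    {z : 𝕜 | ¬IsUnit (AffineMap.lineMap (1 : A) u z)}.Countable := by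
  refine (hu.image fun w => (1 - w)⁻¹).mono fun z hz => ?_
  have hz0 : z ≠ 0 := by
    rintro rfl
    simp at hz
  refine ⟨1 - z⁻¹, fun h => hz ?_, by simp⟩
  have hline : AffineMap.lineMap (1 : A) u z = (-z) • (algebraMap 𝕜 A (1 - z⁻¹) - u) := by
    rw [AffineMap.lineMap_apply_module', Algebra.smul_def, Algebra.smul_def, mul_sub, mul_sub,
      ← map_mul, show -z * (1 - z⁻¹) = 1 - z by field_simp; ring]
    simp only [map_sub, map_one, map_neg, neg_mul, mul_one]
    abel
  rw [hline, Algebra.smul_def]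
  exact ((isUnit_iff_ne_zero.mpr (neg_ne_zero.mpr hz0)).map _).mul h

noncomputable instance Algebra.elemental.instNormedCommRing {𝕜 𝔸 : Type*} [CommRing 𝕜]
    [NormedRing 𝔸] [Algebra 𝕜 𝔸] (a : 𝔸) : NormedCommRing (Algebra.elemental 𝕜 a) :=
  { SubringClass.toNormedRing (Algebra.elemental 𝕜 a) with mul_comm := mul_comm }

section BanachAlgebra

variable {𝔸 : Type*} [NormedRing 𝔸] [NormedAlgebra ℂ 𝔸] [CompleteSpace 𝔸]

theorem Units.mem_connectedComponent_one_of_countable_spectrum (u : 𝔸ˣ)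
    (hu : (spectrum ℂ (u : 𝔸)).Countable) : u ∈ connectedComponent (1 : 𝔸ˣ) := by
  let good := {z : ℂ | IsUnit (AffineMap.lineMap (1 : 𝔸) (u : 𝔸) z)}
  have : ConnectedSpace good := isConnected_iff_connectedSpace.mp <| by
    simpa only [Set.compl_ofPred, not_not] using
      (countable_setOf_not_isUnit_lineMap hu).isConnected_compl_of_one_lt_rank
        (Complex.rank_real_complex ▸ Nat.one_lt_ofNat)
  let lift : good → 𝔸ˣ := fun z => z.2.unit
  have hlift : Continuous lift := by
    rw [Units.isOpenEmbedding_val.isEmbedding.continuous_iff]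
    exact AffineMap.lineMap_continuous.comp continuous_subtype_val
  have h0 : lift ⟨0, by simp [good]⟩ = 1 := Units.ext (by simp [lift])
  have h1 : lift ⟨1, by simp [good]⟩ = u := Units.ext (by simp [lift])
  exact (isConnected_range hlift).isPreconnected.subset_connectedComponent ⟨_, h0⟩ ⟨_, h1⟩

theorem exists_exp_eq_of_countable_spectrum {a : 𝔸} (ha : IsUnit a)
    (hσ : (spectrum ℂ a).Countable) : ∃ b, exp b = a := by
  let S := Algebra.elemental ℂ a
  let x : S := ⟨a, Algebra.elemental.self_mem ℂ a⟩
  -- The closed subalgebra generated by `a` does not enlarge its spectrum, which has no holes.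
  have hσx : spectrum ℂ x = spectrum ℂ a :=
    Subalgebra.spectrum_eq_of_isPreconnected_compl S x
      (hσ.isConnected_compl_of_one_lt_rank (Complex.rank_real_complex ▸ Nat.one_lt_ofNat)).2
  have hx : IsUnit x := by
    rwa [← spectrum.zero_notMem_iff ℂ, hσx, spectrum.zero_notMem_iff]
  obtain ⟨c, hc⟩ := exists_exp_eq_of_mem_connectedComponent_one ℂ
    (hx.unit.mem_connectedComponent_one_of_countable_spectrum (by rwa [hx.unit_spec, hσx]))
  let := NormedAlgebra.restrictScalars ℚ ℂ 𝔸
  let : NormedAlgebra ℚ S := NormedAlgebra.restrictScalars ℚ ℂ S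
  refine ⟨c, ?_⟩
  calc exp (c : 𝔸) = S.val (exp c) := (map_exp S.val continuous_subtype_val c).symm
    _ = a := by rw [hc, IsUnit.unit_spec]; rfl

end BanachAlgebra

/-- every invertible complex `n×n` matrix `A` has a base matrix,
i.e. some `B` with `exp B = A`. -/
theorem exists_base_matrix (n : ℕ) (A : Matrix (Fin n) (Fin n) ℂ) (hA : IsUnit A) :
    ∃ B : Matrix (Fin n) (Fin n) ℂ, NormedSpace.exp B = A := by
  let : NormedRing (Matrix (Fin n) (Fin n) ℂ) := Matrix.linftyOpNormedRing
  let : NormedAlgebra ℂ (Matrix (Fin n) (Fin n) ℂ) := Matrix.linftyOpNormedAlgebra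
  exact exists_exp_eq_of_countable_spectrum hA A.finite_spectrum.countable
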